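/- Assume the Notation 3.2 setup. Let n ≥ 1 be a natural number with binary expansion n = 2^{i_1} + ⋯ + 2^{i_d} where i_1 < i_2 < ⋯ < i_d, let m be such that 2^m ≤ n < 2^{m+1}, and define L(n) = {a ∈ A(n) : a·A(2^{m+1}−n) ⊆ U(2^{m+1})} and R(n) = {a ∈ A(n) : A(2^{m+1}−n)·a ⊆ U(2^{m+1})}. Then there exist subspaces R'(n) ⊆ V(2^{i_1})V(2^{i_2})⋯V(2^{i_d}) and L'(n) ⊆ V(2^{i_d})V(2^{i_{d−1}})⋯V(2^{i_1}) such that R(n) ⊕ R'(n) = A(n) and L(n) ⊕ L'(n) = A(n). -/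

import Mathlib

open Module

noncomputable section

/-- The free associative algebra `K⟨x,y⟩` on two generators. -/
abbrev FA (K : Type*) [Field K] := FreeAlgebra K (Fin 2)

/-- The element of `K⟨x,y⟩` given by a word (a list of letters). -/
def wordOf (K : Type*) [Field K] (l : List (Fin 2)) : FA K :=
  (l.map (FreeAlgebra.ι K)).prod

/-- `a` is a word of length `n` over the two generators. -/
def IsWord (K : Type*) [Field K] (n : ℕ) (a : FA K) : Prop :=
  ∃ l : List (Fin 2), l.length = n ∧ a = wordOf K l

/-- `A(n)`: the span of all words of length `n`. -/
def Aspan (K : Type*) [Field K] (n : ℕ) : Submodule K (FA K) :=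
  Submodule.span K {a | IsWord K n a}

/-- The set `T = ∪_{i ≥ 1} {f(i)-g(i)-1, …, f(i)-1}`. -/
def Tset (f g : ℕ → ℕ) : Set ℕ :=
  {n | ∃ i, 1 ≤ i ∧ f i ≤ n + g i + 1 ∧ n + 1 ≤ f i}

/-- The data and conditions of Notation 3.2 (with the subspaces `U(2^n)`, `V(2^n)`
satisfying conditions (1)–(8) of Proposition 3.1). Here `U n` and `V n` denote the
subspaces `U(2^n)` and `V(2^n)` of `A(2^n)`. -/
structure LSYSetup (K : Type*) [Field K] where
  f : ℕ → ℕ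
  g : ℕ → ℕ
  W : ℕ → Submodule K (FA K)
  U : ℕ → Submodule K (FA K)
  V : ℕ → Submodule K (FA K)
  /-- `f(i-1) < f(i) - g(i) - 1` for all `i ≥ 1` -/
  hf : ∀ i, 1 ≤ i → f (i - 1) + g i + 1 < f i
  /-- `W_i ⊆ A(2^{f(i)})` -/
  hW_le : ∀ i, 1 ≤ i → W i ≤ Aspan K (2 ^ f i)
  /-- `dim W_i ≤ 2^{2^{g(i)}} - 2` -/
  hW_dim : ∀ i, 1 ≤ i → finrank K (W i) ≤ 2 ^ 2 ^ g i - 2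
  hU_le : ∀ n, U n ≤ Aspan K (2 ^ n)
  hV_le : ∀ n, V n ≤ Aspan K (2 ^ n)
  /-- (1) `U(2^n) ⊕ V(2^n) = A(2^n)` -/
  h_disj : ∀ n, Disjoint (U n) (V n)
  h_sup : ∀ n, U n ⊔ V n = Aspan K (2 ^ n)
  /-- (2) `dim V(2^n) = 2` whenever `n ∉ T` -/
  h_dimV : ∀ n, n ∉ Tset f g → finrank K (V n) = 2
  /-- (3) `dim V(2^{n+j}) = 2^{2^j}` whenever `n = f(i)-g(i)-1` and `0 ≤ j ≤ g(i)` -/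
  h_dimV' : ∀ i j n, 1 ≤ i → n + g i + 1 = f i → j ≤ g i →
      finrank K (V (n + j)) = 2 ^ 2 ^ j
  /-- (4) `V(2^n)` has a basis consisting of words -/
  h_basis : ∀ n, ∃ s : Set (FA K), (∀ w ∈ s, IsWord K (2 ^ n) w) ∧
      LinearIndependent K ((↑) : s → FA K) ∧ Submodule.span K s = V n
  /-- (5) `W_i ⊆ U(2^{f(i)})` -/
  hWU : ∀ i, 1 ≤ i → W i ≤ U (f i)
  /-- (6) `A(2^n)U(2^n) + U(2^n)A(2^n) ⊆ U(2^{n+1})` -/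
  hU_mul : ∀ n, Aspan K (2 ^ n) * U n ⊔ U n * Aspan K (2 ^ n) ≤ U (n + 1)
  /-- (7) `V(2^{n+1}) ⊆ V(2^n)V(2^n)` -/
  hV_mul : ∀ n, V (n + 1) ≤ V n * V n
  /-- (8) if `n ∉ T` then some word `w ∈ V(2^n)` has `w·A(2^n) ⊆ U(2^{n+1})` -/
  h_word : ∀ n, n ∉ Tset f g → ∃ w, IsWord K (2 ^ n) w ∧ w ∈ V n ∧
      ∀ a ∈ Aspan K (2 ^ n), w * a ∈ U (n + 1)

variable {K : Type*} [Field K]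

/-- `R(n) = {a ∈ A(n) : A(2^{m+1}-n)·a ⊆ U(2^{m+1})}`. -/
def Rspace (S : LSYSetup K) (n m : ℕ) : Submodule K (FA K) where
  carrier := {a | a ∈ Aspan K n ∧ ∀ b ∈ Aspan K (2 ^ (m + 1) - n), b * a ∈ S.U (m + 1)}
  add_mem' := by
    rintro a b ⟨ha1, ha2⟩ ⟨hb1, hb2⟩
    exact ⟨add_mem ha1 hb1, fun c hc => by
      rw [mul_add]; exact add_mem (ha2 c hc) (hb2 c hc)⟩
  zero_mem' := ⟨zero_mem _, fun c hc => by rw [mul_zero]; exact zero_mem _⟩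
  smul_mem' := by
    rintro k a ⟨ha1, ha2⟩
    exact ⟨Submodule.smul_mem _ k ha1, fun c hc => by
      rw [mul_smul_comm]; exact Submodule.smul_mem _ _ (ha2 c hc)⟩

/-- `L(n) = {a ∈ A(n) : a·A(2^{m+1}-n) ⊆ U(2^{m+1})}`. -/
def Lspace (S : LSYSetup K) (n m : ℕ) : Submodule K (FA K) where
  carrier := {a | a ∈ Aspan K n ∧ ∀ b ∈ Aspan K (2 ^ (m + 1) - n), a * b ∈ S.U (m + 1)}
  add_mem' := by
    rintro a b ⟨ha1, ha2⟩ ⟨hb1, hb2⟩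
    exact ⟨add_mem ha1 hb1, fun c hc => by
      rw [add_mul]; exact add_mem (ha2 c hc) (hb2 c hc)⟩
  zero_mem' := ⟨zero_mem _, fun c hc => by rw [zero_mul]; exact zero_mem _⟩
  smul_mem' := by
    rintro k a ⟨ha1, ha2⟩
    exact ⟨Submodule.smul_mem _ k ha1, fun c hc => by
      rw [smul_mul_assoc]; exact Submodule.smul_mem _ _ (ha2 c hc)⟩

/-- `I(n) = {a ∈ A(n) : A(j)·a·A(2^{m+2}-j-n) ⊆ U(2^{m+1})A(2^{m+1}) + A(2^{m+1})U(2^{m+1})`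
for all `0 ≤ j ≤ 2^{m+2}-n}`, where `2^m ≤ n < 2^{m+1}` (i.e. `m = Nat.log 2 n`). -/
def Ispace (S : LSYSetup K) (n : ℕ) : Submodule K (FA K) where
  carrier := {a | a ∈ Aspan K n ∧ ∀ j ≤ 2 ^ (Nat.log 2 n + 2) - n,
      ∀ b ∈ Aspan K j, ∀ c ∈ Aspan K (2 ^ (Nat.log 2 n + 2) - j - n),
      b * a * c ∈ S.U (Nat.log 2 n + 1) * Aspan K (2 ^ (Nat.log 2 n + 1)) ⊔
        Aspan K (2 ^ (Nat.log 2 n + 1)) * S.U (Nat.log 2 n + 1)}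
  add_mem' := by
    rintro a b ⟨ha1, ha2⟩ ⟨hb1, hb2⟩
    refine ⟨add_mem ha1 hb1, fun j hj c hc d hd => ?_⟩
    rw [mul_add, add_mul]
    exact add_mem (ha2 j hj c hc d hd) (hb2 j hj c hc d hd)
  zero_mem' := ⟨zero_mem _, fun j hj c hc d hd => by
    rw [mul_zero, zero_mul]; exact zero_mem _⟩
  smul_mem' := by
    rintro k a ⟨ha1, ha2⟩
    refine ⟨Submodule.smul_mem _ k ha1, fun j hj c hc d hd => ?_⟩
    rw [mul_smul_comm, smul_mul_assoc]
    exact Submodule.smul_mem _ _ (ha2 j hj c hc d hd)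

/-!
Write `A(n) = A(2^{i₁}) ⋯ A(2^{i_d})` and split each factor as `U ⊕ V`, starting from the
smallest power. A term whose first `U`-factor is `U(2^k)` sits in a product `A(a) U(2^k) A(b)`
with `2^k ∣ a`; after padding by `A(2^{m+1} - n)` on the free side, repeated use of (6) absorbs it
into `U(2^{m+1})`. Hence `A(n) = R(n) + V(2^{i₁}) ⋯ V(2^{i_d})` (and symmetrically for `L(n)`), and
in a vector space a complement of `R(n)` can be chosen inside any subspace that together with
`R(n)` spans `A(n)`.
-/

open scoped Pointwise

lemma wordOf_append (l₁ l₂ : List (Fin 2)) :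
    wordOf K (l₁ ++ l₂) = wordOf K l₁ * wordOf K l₂ := by
  simp [wordOf]

lemma setOf_isWord_add (a b : ℕ) :
    {z : FA K | IsWord K (a + b) z} = {z | IsWord K a z} * {z | IsWord K b z} := by
  ext z
  constructor
  · rintro ⟨l, hl, rfl⟩
    refine ⟨_, ⟨l.take a, by simp [hl], rfl⟩, _, ⟨l.drop a, by simp [hl], rfl⟩, ?_⟩
    exact (wordOf_append _ _).symm.trans (by rw [List.take_append_drop])
  · rintro ⟨_, ⟨lx, hlx, rfl⟩, _, ⟨ly, hly, rfl⟩, rfl⟩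
    exact ⟨lx ++ ly, by simp [hlx, hly], (wordOf_append lx ly).symm⟩

lemma Aspan_mul_Aspan (a b : ℕ) : Aspan K a * Aspan K b = Aspan K (a + b) := by
  rw [Aspan, Aspan, Submodule.span_mul_span, Aspan, setOf_isWord_add]

lemma Aspan_zero : Aspan K 0 = 1 := by
  rw [Aspan, Submodule.one_eq_span]
  congr 1
  ext z
  simp [IsWord, wordOf]

lemma exists_le_disjoint_sup_eq_sup {α : Type*} [Lattice α] [BoundedOrder α]
    [IsModularLattice α] [ComplementedLattice α] (a b : α) :
    ∃ b' ≤ b, Disjoint a b' ∧ a ⊔ b' = a ⊔ b := by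
  obtain ⟨b', hdisj, hsup⟩ :=
    IsModularLattice.exists_disjoint_and_sup_eq (inf_le_right : a ⊓ b ≤ b)
  have hb' : b' ≤ b := hsup ▸ le_sup_right
  refine ⟨b', hb', disjoint_iff_inf_le.mpr ?_, ?_⟩
  · exact (le_inf (inf_le_inf_left a hb') inf_le_right).trans hdisj.le_bot
  · rw [← hsup, ← sup_assoc, sup_inf_self]

namespace LSYSetup

variable (S : LSYSetup K)

lemma prod_map_V_le_Aspan (L : List ℕ) :
    (L.map S.V).prod ≤ Aspan K (L.map (2 ^ ·)).sum := by
  induction L with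
  | nil => simp [Aspan_zero]
  | cons i L ih =>
    simpa only [List.map_cons, List.prod_cons, List.sum_cons, ← Aspan_mul_Aspan]
      using mul_le_mul' (S.hV_le i) ih

lemma Aspan_mul_U_le (k : ℕ) : Aspan K (2 ^ k) * S.U k ≤ S.U (k + 1) :=
  le_sup_left.trans (S.hU_mul k)

lemma U_mul_Aspan_le (k : ℕ) : S.U k * Aspan K (2 ^ k) ≤ S.U (k + 1) :=
  le_sup_right.trans (S.hU_mul k)

/-- Absorbing one neighbouring block `A(2^k)` on the side dictated by the parity of `s` turns
`U(2^k)` into `U(2^(k+1))` and halves the problem. -/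
lemma Aspan_mul_U_mul_Aspan_le {d : ℕ} :
    ∀ {k s t : ℕ}, s + 1 + t = 2 ^ d →
      Aspan K (2 ^ k * s) * S.U k * Aspan K (2 ^ k * t) ≤ S.U (k + d) := by
  induction d with
  | zero =>
    intro k s t h
    obtain ⟨rfl, rfl⟩ : s = 0 ∧ t = 0 := by simp at h; omega
    simp [Aspan_zero]
  | succ d ih =>
    intro k s t h
    rw [pow_succ] at h
    rw [show k + (d + 1) = k + 1 + d by omega]
    obtain ⟨s', rfl | rfl⟩ := Nat.even_or_odd' s
    · obtain ⟨t', rfl⟩ : ∃ t', t = 2 * t' + 1 := ⟨t / 2, by omega⟩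
      rw [show 2 ^ k * (2 * s') = 2 ^ (k + 1) * s' by ring,
        show 2 ^ k * (2 * t' + 1) = 2 ^ k + 2 ^ (k + 1) * t' by ring,
        ← Aspan_mul_Aspan, ← mul_assoc, mul_assoc _ (S.U k)]
      calc _ ≤ Aspan K (2 ^ (k + 1) * s') * S.U (k + 1) * Aspan K (2 ^ (k + 1) * t') := by
            gcongr; exact S.U_mul_Aspan_le k
        _ ≤ _ := ih (by omega)
    · obtain ⟨t', rfl⟩ : ∃ t', t = 2 * t' := ⟨t / 2, by omega⟩
      rw [show 2 ^ k * (2 * s' + 1) = 2 ^ (k + 1) * s' + 2 ^ k by ring,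
        show 2 ^ k * (2 * t') = 2 ^ (k + 1) * t' by ring,
        ← Aspan_mul_Aspan, mul_assoc (Aspan K _) (Aspan K (2 ^ k))]
      calc _ ≤ Aspan K (2 ^ (k + 1) * s') * S.U (k + 1) * Aspan K (2 ^ (k + 1) * t') := by
            gcongr; exact S.Aspan_mul_U_le k
        _ ≤ _ := ih (by omega)

lemma Aspan_mul_U_mul_Aspan_le_of_dvd {k M a b : ℕ} (ha : 2 ^ k ∣ a) (hb : 2 ^ k ∣ b)
    (h : a + 2 ^ k + b = 2 ^ M) : Aspan K a * S.U k * Aspan K b ≤ S.U M := by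
  obtain ⟨s, rfl⟩ := ha
  obtain ⟨t, rfl⟩ := hb
  have hkM : k ≤ M := (Nat.pow_le_pow_iff_right one_lt_two).mp (by omega)
  obtain ⟨d, rfl⟩ := Nat.exists_eq_add_of_le hkM
  refine S.Aspan_mul_U_mul_Aspan_le (Nat.eq_of_mul_eq_mul_left (pow_pos two_pos k) ?_)
  rw [← pow_add, ← h]
  ring

variable {m : ℕ}

lemma Rspace_le_Aspan (n : ℕ) : Rspace S n m ≤ Aspan K n := fun _ ha => ha.1

lemma Lspace_le_Aspan (n : ℕ) : Lspace S n m ≤ Aspan K n := fun _ ha => ha.1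

variable {S} in
lemma le_Rspace {n : ℕ} {X : Submodule K (FA K)} (hX : X ≤ Aspan K n)
    (hU : Aspan K (2 ^ (m + 1) - n) * X ≤ S.U (m + 1)) : X ≤ Rspace S n m :=
  fun _ ha => ⟨hX ha, fun _ hb => hU (Submodule.mul_mem_mul hb ha)⟩

variable {S} in
lemma le_Lspace {n : ℕ} {X : Submodule K (FA K)} (hX : X ≤ Aspan K n)
    (hU : X * Aspan K (2 ^ (m + 1) - n) ≤ S.U (m + 1)) : X ≤ Lspace S n m :=
  fun _ ha => ⟨hX ha, fun _ hb => hU (Submodule.mul_mem_mul ha hb)⟩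

lemma Aspan_mul_Rspace_le {k n : ℕ} (h : k + n ≤ 2 ^ (m + 1)) :
    Aspan K k * Rspace S n m ≤ Rspace S (k + n) m := by
  rw [Submodule.mul_le]
  rintro x hx r ⟨hr, hrU⟩
  refine ⟨Aspan_mul_Aspan (K := K) k n ▸ Submodule.mul_mem_mul hx hr, fun b hb => ?_⟩
  rw [← mul_assoc]
  apply hrU
  rw [show 2 ^ (m + 1) - n = 2 ^ (m + 1) - (k + n) + k by omega, ← Aspan_mul_Aspan]
  exact Submodule.mul_mem_mul hb hx

lemma Lspace_mul_Aspan_le {k n : ℕ} (h : n + k ≤ 2 ^ (m + 1)) :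
    Lspace S n m * Aspan K k ≤ Lspace S (n + k) m := by
  rw [Submodule.mul_le]
  rintro r ⟨hr, hrU⟩ x hx
  refine ⟨Aspan_mul_Aspan (K := K) n k ▸ Submodule.mul_mem_mul hr hx, fun b hb => ?_⟩
  rw [mul_assoc]
  apply hrU
  rw [show 2 ^ (m + 1) - n = k + (2 ^ (m + 1) - (n + k)) by omega, ← Aspan_mul_Aspan]
  exact Submodule.mul_mem_mul hx hb

lemma U_mul_Aspan_le_Rspace {i n : ℕ} (hn : 2 ^ i ∣ n) (h : 2 ^ i + n ≤ 2 ^ (m + 1)) :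
    S.U i * Aspan K n ≤ Rspace S (2 ^ i + n) m := by
  have him : i ≤ m + 1 := (Nat.pow_le_pow_iff_right one_lt_two).mp (by omega)
  refine le_Rspace ((mul_le_mul' (S.hU_le i) le_rfl).trans (Aspan_mul_Aspan _ _).le) ?_
  rw [← mul_assoc]
  exact S.Aspan_mul_U_mul_Aspan_le_of_dvd
    (Nat.dvd_sub (pow_dvd_pow 2 him) (dvd_add dvd_rfl hn)) hn (by omega)

lemma Aspan_mul_U_le_Lspace {i n : ℕ} (hn : 2 ^ i ∣ n) (h : n + 2 ^ i ≤ 2 ^ (m + 1)) :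
    Aspan K n * S.U i ≤ Lspace S (n + 2 ^ i) m := by
  have him : i ≤ m + 1 := (Nat.pow_le_pow_iff_right one_lt_two).mp (by omega)
  refine le_Lspace ((mul_le_mul' le_rfl (S.hU_le i)).trans (Aspan_mul_Aspan _ _).le) ?_
  exact S.Aspan_mul_U_mul_Aspan_le_of_dvd hn
    (Nat.dvd_sub (pow_dvd_pow 2 him) (dvd_add hn dvd_rfl)) (by omega)

lemma pow_dvd_sum_map_pow {i : ℕ} {L : List ℕ} (h : ∀ j ∈ L, i ≤ j) :
    2 ^ i ∣ (L.map (2 ^ ·)).sum :=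
  List.dvd_sum fun _ hx => by
    obtain ⟨j, hj, rfl⟩ := List.mem_map.mp hx
    exact pow_dvd_pow 2 (h j hj)

lemma Aspan_le_Rspace_sup_prod (L : List ℕ) (hL : L.Pairwise (· ≤ ·))
    (hsum : (L.map (2 ^ ·)).sum ≤ 2 ^ (m + 1)) :
    Aspan K (L.map (2 ^ ·)).sum ≤ Rspace S (L.map (2 ^ ·)).sum m ⊔ (L.map S.V).prod := by
  induction L with
  | nil => simp [Aspan_zero]
  | cons i L ih =>
    rw [List.pairwise_cons] at hL
    simp only [List.map_cons, List.sum_cons, List.prod_cons] at hsum ⊢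
    set n := (L.map (2 ^ ·)).sum
    calc Aspan K (2 ^ i + n) = S.U i * Aspan K n ⊔ S.V i * Aspan K n := by
          rw [← Aspan_mul_Aspan, ← S.h_sup, Submodule.sup_mul]
      _ ≤ Rspace S (2 ^ i + n) m ⊔ S.V i * (Rspace S n m ⊔ (L.map S.V).prod) :=
          sup_le_sup (S.U_mul_Aspan_le_Rspace (pow_dvd_sum_map_pow hL.1) hsum)
            (mul_le_mul' le_rfl (ih hL.2 (le_add_self.trans hsum)))
      _ ≤ Rspace S (2 ^ i + n) m ⊔ S.V i * (L.map S.V).prod := by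
          rw [Submodule.mul_sup, ← sup_assoc]
          refine sup_le_sup_right (sup_le le_rfl ?_) _
          exact (mul_le_mul' (S.hV_le i) le_rfl).trans (S.Aspan_mul_Rspace_le hsum)

lemma Aspan_le_Lspace_sup_prod (L : List ℕ) (hL : L.Pairwise (· ≤ ·))
    (hsum : (L.map (2 ^ ·)).sum ≤ 2 ^ (m + 1)) :
    Aspan K (L.map (2 ^ ·)).sum ≤
      Lspace S (L.map (2 ^ ·)).sum m ⊔ (L.reverse.map S.V).prod := by
  induction L with
  | nil => simp [Aspan_zero]
  | cons i L ih =>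
    rw [List.pairwise_cons] at hL
    simp only [List.map_cons, List.sum_cons, List.reverse_cons, List.map_append,
      List.prod_append, List.map_nil, List.prod_cons, List.prod_nil, mul_one] at hsum ⊢
    set n := (L.map (2 ^ ·)).sum
    rw [add_comm] at hsum ⊢
    calc Aspan K (n + 2 ^ i) = Aspan K n * S.U i ⊔ Aspan K n * S.V i := by
          rw [← Aspan_mul_Aspan, ← S.h_sup, Submodule.mul_sup]
      _ ≤ Lspace S (n + 2 ^ i) m ⊔ (Lspace S n m ⊔ (L.reverse.map S.V).prod) * S.V i :=
          sup_le_sup (S.Aspan_mul_U_le_Lspace (pow_dvd_sum_map_pow hL.1) hsum)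
            (mul_le_mul' (ih hL.2 (le_self_add.trans hsum)) le_rfl)
      _ ≤ Lspace S (n + 2 ^ i) m ⊔ (L.reverse.map S.V).prod * S.V i := by
          rw [Submodule.sup_mul, ← sup_assoc]
          refine sup_le_sup_right (sup_le le_rfl ?_) _
          exact (mul_le_mul' le_rfl (S.hV_le i)).trans (S.Lspace_mul_Aspan_le hsum)

end LSYSetup

theorem corollary_3_4_general (S : LSYSetup K) (n : ℕ)
    (L : List ℕ) (hL : L.Pairwise (· < ·)) (hsum : (L.map (2 ^ ·)).sum = n)
    (m : ℕ) (hm₂ : n < 2 ^ (m + 1)) :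
    ∃ R' L' : Submodule K (FA K),
      R' ≤ (L.map S.V).prod ∧ L' ≤ (L.reverse.map S.V).prod ∧
      Disjoint (Rspace S n m) R' ∧ Rspace S n m ⊔ R' = Aspan K n ∧
      Disjoint (Lspace S n m) L' ∧ Lspace S n m ⊔ L' = Aspan K n := by
  subst hsum
  have hL' : L.Pairwise (· ≤ ·) := hL.imp le_of_lt
  have hprod_rev : (L.reverse.map S.V).prod ≤ Aspan K (L.map (2 ^ ·)).sum := by
    simpa using S.prod_map_V_le_Aspan L.reverse
  obtain ⟨R', hR'V, hR'disj, hR'sup⟩ :=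
    exists_le_disjoint_sup_eq_sup (Rspace S _ m) (L.map S.V).prod
  obtain ⟨L', hL'V, hL'disj, hL'sup⟩ :=
    exists_le_disjoint_sup_eq_sup (Lspace S _ m) (L.reverse.map S.V).prod
  refine ⟨R', L', hR'V, hL'V, hR'disj, ?_, hL'disj, ?_⟩
  · rw [hR'sup]
    exact le_antisymm (sup_le (S.Rspace_le_Aspan _) (S.prod_map_V_le_Aspan L))
      (S.Aspan_le_Rspace_sup_prod L hL' hm₂.le)
  · rw [hL'sup]
    exact le_antisymm (sup_le (S.Lspace_le_Aspan _) hprod_rev)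
      (S.Aspan_le_Lspace_sup_prod L hL' hm₂.le)

/-- **Corollary 3.4.** If `n ≥ 1` has binary expansion `2^{i₁} + ⋯ + 2^{i_d}` with
`i₁ < ⋯ < i_d` and `2^m ≤ n < 2^{m+1}`, then there exist subspaces
`R'(n) ⊆ V(2^{i₁})⋯V(2^{i_d})` and `L'(n) ⊆ V(2^{i_d})⋯V(2^{i₁})` with
`R(n) ⊕ R'(n) = L(n) ⊕ L'(n) = A(n)`. -/
theorem corollary_3_4 (S : LSYSetup K) (n : ℕ) (hn : 1 ≤ n)
    (L : List ℕ) (hL : L.Pairwise (· < ·)) (hsum : (L.map (2 ^ ·)).sum = n)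
    (m : ℕ) (hm₁ : 2 ^ m ≤ n) (hm₂ : n < 2 ^ (m + 1)) :
    ∃ R' L' : Submodule K (FA K),
      R' ≤ (L.map S.V).prod ∧ L' ≤ (L.reverse.map S.V).prod ∧
      Disjoint (Rspace S n m) R' ∧ Rspace S n m ⊔ R' = Aspan K n ∧
      Disjoint (Lspace S n m) L' ∧ Lspace S n m ⊔ L' = Aspan K n :=
  corollary_3_4_general S n L hL hsum m hm₂

end
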